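/- arXiv:2302.00196 — 6 statements merged into one kernel-verified Lean document; each statement's English description precedes it below -/
import Mathlib

section
/- Let φ : ℝ^n → ℝ be concave and increasing, q₀ ∈ ℝ^n, and define C(q) = inf{c ∈ ℝ | φ(c·1 - q) ≥ φ(q₀)}. Then for any q ∈ ℝ^n, C(-q) = 0 if and only if φ(q) = φ(q₀). -/
set_option maxHeartbeats 1000000 in
theorem stmt_3 (n : ℕ) (φ : (Fin n → ℝ) → ℝ)
    (hconc : ConcaveOn ℝ Set.univ φ) (hinc : StrictMono φ) (q₀ : Fin n → ℝ)
    (C : (Fin n → ℝ) → ℝ)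
    (hC : ∀ q, C q = sInf {c : ℝ | φ (c • (1 : Fin n → ℝ) - q) ≥ φ q₀}) :
    ∀ q : Fin n → ℝ, C (-q) = 0 ↔ φ q = φ q₀ := by
  intro q
  rw [hC]
  rcases Nat.eq_zero_or_pos n with hn | hn
  · subst hn
    have hq : q = q₀ := Subsingleton.elim _ _
    have hset : {c : ℝ | φ (c • (1 : Fin 0 → ℝ) - -q) ≥ φ q₀} = Set.univ := by
      ext c
      simp only [Set.mem_setOf_eq, Set.mem_univ, iff_true, ge_iff_le]
      exact le_of_eq (congrArg φ (Subsingleton.elim _ _))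
    rw [hset, hq]
    simp only [eq_self_iff_true, iff_true]
    refine Real.sInf_of_not_bddBelow ?_
    rintro ⟨b, hb⟩
    have := hb (Set.mem_univ (b - 1))
    linarith
  · -- n > 0
    set g : ℝ → ℝ := fun c => φ (c • (1 : Fin n → ℝ) + q) with hg
    set y : ℝ := φ q₀ with hy
    have hsetq : {c : ℝ | φ (c • (1 : Fin n → ℝ) - -q) ≥ φ q₀} = {c : ℝ | y ≤ g c} := by
      ext c; simp [sub_neg_eq_add, hg, hy, ge_iff_le]
    rw [hsetq]
    set S : Set ℝ := {c : ℝ | y ≤ g c} with hS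
    have i0 : Fin n := ⟨0, hn⟩
    have hg0 : g 0 = φ q := by simp [hg]
    -- g is strictly monotone
    have gmono : StrictMono g := by
      intro a b hab
      apply hinc
      refine lt_of_le_of_ne (fun i => by
        simp only [Pi.add_apply, Pi.smul_apply, Pi.one_apply, smul_eq_mul, mul_one]
        linarith) ?_
      intro h
      have := congrFun h i0
      simp only [Pi.add_apply, Pi.smul_apply, Pi.one_apply, smul_eq_mul, mul_one] at this
      linarith
    -- g is concave
    have gconc : ConcaveOn ℝ Set.univ g := by
      refine ⟨convex_univ, ?_⟩
      intro x _ z _ a b ha hb hab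
      have key := hconc.2 (Set.mem_univ (x • (1 : Fin n → ℝ) + q))
        (Set.mem_univ (z • (1 : Fin n → ℝ) + q)) ha hb hab
      have harg : a • (x • (1 : Fin n → ℝ) + q) + b • (z • (1 : Fin n → ℝ) + q)
          = (a • x + b • z) • (1 : Fin n → ℝ) + q := by
        have hb' : b = 1 - a := by linarith
        subst hb'
        funext i
        simp only [Pi.add_apply, Pi.smul_apply, Pi.one_apply, smul_eq_mul, mul_one]
        ring
      rw [harg] at key
      exact key
    -- S is nonempty
    have hSne : S.Nonempty := by
      obtain ⟨M, hM⟩ := Finite.exists_le (fun i => q₀ i - q i)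
      refine ⟨M + 1, ?_⟩
      have hlt : q₀ < (M + 1) • (1 : Fin n → ℝ) + q := by
        refine lt_of_le_of_ne (fun i => by
          have := hM i
          simp only [Pi.add_apply, Pi.smul_apply, Pi.one_apply, smul_eq_mul, mul_one]
          linarith) ?_
        intro h
        have h1 := congrFun h i0
        have h2 := hM i0
        simp only [Pi.add_apply, Pi.smul_apply, Pi.one_apply, smul_eq_mul, mul_one] at h1
        linarith
      exact (hinc hlt).le
    -- chord extension bound: for x < -1, g x ≤ g 0 + (g 0 - g (-1)) * x
    have hchord : ∀ x : ℝ, x < -1 → g x ≤ g 0 + (g 0 - g (-1)) * x := by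
      intro x hx
      have hxneg : x < 0 := by linarith
      have hxne : x ≠ 0 := ne_of_lt hxneg
      set a : ℝ := -1 / x with ha
      have hax : a * x = -1 := by rw [ha]; field_simp
      have ha0 : 0 < a := by nlinarith [hax]
      have ha1 : a < 1 := by nlinarith [hax]
      have key := gconc.2 (Set.mem_univ x) (Set.mem_univ 0) ha0.le
        (by linarith : (0:ℝ) ≤ 1 - a) (by ring)
      simp only [smul_eq_mul] at key
      rw [show a * x + (1 - a) * 0 = -1 by rw [hax]; ring] at key
      -- key : a * g x + (1 - a) * g 0 ≤ g (-1)
      have h3 : a * (g x - g 0) ≤ a * ((g 0 - g (-1)) * x) := by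
        have h4 : a * ((g 0 - g (-1)) * x) = -(g 0 - g (-1)) := by
          rw [show a * ((g 0 - g (-1)) * x) = (g 0 - g (-1)) * (a * x) from by ring, hax]; ring
        rw [h4]
        nlinarith [key]
      have h5 := le_of_mul_le_mul_left h3 ha0
      linarith
    -- a point c₁ < 0 with g c₁ < y
    have hd : 0 < g 0 - g (-1) := by
      have := gmono (show (-1:ℝ) < 0 by norm_num); linarith
    set d : ℝ := g 0 - g (-1) with hdd
    set c₁ : ℝ := min (-2) ((y - g 0 - 1) / d) with hc₁
    have hc₁lt : c₁ < -1 := lt_of_le_of_lt (min_le_left _ _) (by norm_num)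
    have hc₁neg : c₁ < 0 := by linarith
    have hgc₁ : g c₁ < y := by
      have h1 := hchord c₁ hc₁lt
      have h2 : c₁ ≤ (y - g 0 - 1) / d := min_le_right _ _
      have h3 : d * c₁ ≤ y - g 0 - 1 := by
        rw [← le_div_iff₀' hd]
        exact h2
      linarith
    have hgc₁0 : g c₁ < g 0 := gmono hc₁neg
    -- S is bounded below
    have hSbdd : BddBelow S := by
      refine ⟨c₁, fun c hc => ?_⟩
      by_contra h
      push_neg at h
      have := gmono h
      have hyc : y ≤ g c := hc
      linarith
    constructor
    · -- sInf S = 0 → φ q = y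
      intro hs
      by_contra hne
      rcases lt_or_gt_of_ne hne with hlt | hgt
      · -- φ q < y, i.e. g 0 < y : show sInf S > 0, contradiction
        have hg0y : g 0 < y := by rw [hg0]; exact hlt
        have hyc₁ : g c₁ < y := hgc₁
        set t₀ : ℝ := (y - g 0) / (y - g c₁) with ht₀
        have hden : 0 < y - g c₁ := by linarith
        have ht₀0 : 0 < t₀ := div_pos (by linarith) hden
        have ht₀1 : t₀ < 1 := by
          rw [ht₀, div_lt_one hden]; linarith
        set δ : ℝ := t₀ * (-c₁) / (1 - t₀) with hδ
        have hδ0 : 0 < δ := div_pos (mul_pos ht₀0 (by linarith)) (by linarith)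
        have hlb : ∀ c ∈ S, δ ≤ c := by
          intro c hc
          have hyc : y ≤ g c := hc
          have hcpos : 0 < c := by
            by_contra h
            push_neg at h
            have := gmono.monotone h
            linarith
          have hsub : 0 < c - c₁ := by linarith
          set t : ℝ := c / (c - c₁) with ht
          have ht0 : 0 < t := div_pos hcpos hsub
          have ht1 : t ≤ 1 := by
            rw [ht, div_le_one hsub]; linarith
          have harg : t * c₁ + (1 - t) * c = 0 := by
            rw [ht]; field_simp; ring
          have key := gconc.2 (Set.mem_univ c₁) (Set.mem_univ c) ht0.le
            (by linarith : (0:ℝ) ≤ 1 - t) (by ring)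
          simp only [smul_eq_mul] at key
          rw [harg] at key
          -- key : t * g c₁ + (1 - t) * g c ≤ g 0
          have hmul : (1 - t) * y ≤ (1 - t) * g c :=
            mul_le_mul_of_nonneg_left hyc (by linarith)
          have hkey2 : y - g 0 ≤ t * (y - g c₁) := by nlinarith
          have htt : t₀ ≤ t := by
            rw [ht₀, div_le_iff₀ hden]
            nlinarith
          have h6 : t₀ * (c - c₁) ≤ c := by
            calc t₀ * (c - c₁) ≤ (c / (c - c₁)) * (c - c₁) :=
                  mul_le_mul_of_nonneg_right (ht ▸ htt) hsub.le
              _ = c := by field_simp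
          rw [hδ, div_le_iff₀ (by linarith : (0:ℝ) < 1 - t₀)]
          nlinarith
        have := le_csInf hSne hlb
        linarith
      · -- φ q > y, i.e. g 0 > y : find a negative element of S, contradiction
        have hg0y : y < g 0 := by rw [hg0]; exact hgt
        set t : ℝ := min (1/2) ((g 0 - y) / (g 0 - g c₁)) with ht
        have hden : 0 < g 0 - g c₁ := by linarith
        have ht0 : 0 < t :=
          lt_min (by norm_num) (div_pos (by linarith) hden)
        have ht1 : t < 1 := lt_of_le_of_lt (min_le_left _ _) (by norm_num)
        have key := gconc.2 (Set.mem_univ c₁) (Set.mem_univ (0:ℝ)) ht0.le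
          (by linarith : (0:ℝ) ≤ 1 - t) (by ring)
        simp only [smul_eq_mul] at key
        rw [show t * c₁ + (1 - t) * 0 = t * c₁ by ring] at key
        -- key : t * g c₁ + (1 - t) * g 0 ≤ g (t * c₁)
        have htle : t * (g 0 - g c₁) ≤ g 0 - y :=
          (le_div_iff₀ hden).mp (min_le_right _ _)
        have htle2 : t * g 0 - t * g c₁ ≤ g 0 - y := by
          linarith [htle, (by ring : t * (g 0 - g c₁) = t * g 0 - t * g c₁)]
        have hmem : t * c₁ ∈ S := by
          show y ≤ g (t * c₁)
          linarith [key, htle2]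
        have hle := csInf_le hSbdd hmem
        have : t * c₁ < 0 := mul_neg_of_pos_of_neg ht0 hc₁neg
        linarith
    · -- φ q = y → sInf S = 0
      intro hq
      have h0mem : (0:ℝ) ∈ S := by
        show y ≤ g 0
        rw [hg0, hq]
      have hlb : ∀ c ∈ S, (0:ℝ) ≤ c := by
        intro c hc
        by_contra h
        push_neg at h
        have := gmono h
        have hyc : y ≤ g c := hc
        rw [hg0, hq] at this
        linarith
      exact le_antisymm (csInf_le ⟨0, hlb⟩ h0mem) (le_csInf hSne hlb)
end

section
/- Let C : ℝ^n → ℝ be convex, increasing, and satisfy C(0) > 0. Then for every q ∈ ℝ^n with q ≻ 0 (all coordinates strictly positive), there exists a unique α > 0 such that C(-q/α) = 0, provided additionally that C is ones-invariant. -/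
theorem stmt_4 (n : ℕ) (C : (Fin n → ℝ) → ℝ)
    (hconv : ConvexOn ℝ Set.univ C) (hinc : StrictMono C)
    (hC0 : 0 < C 0)
    (hones : ∀ (q : Fin n → ℝ) (t : ℝ), C (q + t • (1 : Fin n → ℝ)) = C q + t) :
    ∀ q : Fin n → ℝ, (∀ i, 0 < q i) →
      ∃! α : ℝ, 0 < α ∧ C (α⁻¹ • (-q)) = 0 := by
  intro q hq
  -- n must be nonzero
  have hn : Nonempty (Fin n) := by
    by_contra h
    have h1 : (1 : Fin n → ℝ) = 0 := funext fun i => absurd ⟨i⟩ h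
    have := hones 0 1
    rw [h1, smul_zero, add_zero] at this
    linarith
  have hmono : Monotone C := hinc.monotone
  have hcont : Continuous C := hconv.locallyLipschitz.continuous
  set m := Finset.univ.inf' Finset.univ_nonempty q with hm
  set M := Finset.univ.sup' Finset.univ_nonempty q with hM
  have hmpos : 0 < m := by
    rw [hm, Finset.lt_inf'_iff]
    exact fun i _ => hq i
  have hmM : m ≤ M := by
    obtain ⟨i⟩ := hn
    exact le_trans (Finset.inf'_le _ (Finset.mem_univ i)) (Finset.le_sup' _ (Finset.mem_univ i))
  have hMpos : 0 < M := lt_of_lt_of_le hmpos hmM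
  set f : ℝ → ℝ := fun α => C (α⁻¹ • (-q)) with hf
  -- upper bound: f α ≤ C 0 - α⁻¹ * m for α > 0
  have hub : ∀ α : ℝ, 0 < α → f α ≤ C 0 - α⁻¹ * m := by
    intro α hα
    have h1 : (α⁻¹ • (-q)) ≤ (0 : Fin n → ℝ) + (-(α⁻¹ * m)) • (1 : Fin n → ℝ) := by
      intro i
      simp only [Pi.add_apply, Pi.smul_apply, Pi.neg_apply, Pi.zero_apply, Pi.one_apply,
        smul_eq_mul, mul_one, zero_add]
      have : m ≤ q i := Finset.inf'_le _ (Finset.mem_univ i)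
      nlinarith [inv_pos.mpr hα]
    have := hmono h1
    rw [hones 0 (-(α⁻¹ * m))] at this
    linarith
  -- lower bound: C 0 - α⁻¹ * M ≤ f α for α > 0
  have hlb : ∀ α : ℝ, 0 < α → C 0 - α⁻¹ * M ≤ f α := by
    intro α hα
    have h1 : (0 : Fin n → ℝ) + (-(α⁻¹ * M)) • (1 : Fin n → ℝ) ≤ α⁻¹ • (-q) := by
      intro i
      simp only [Pi.add_apply, Pi.smul_apply, Pi.neg_apply, Pi.zero_apply, Pi.one_apply,
        smul_eq_mul, mul_one, zero_add]
      have : q i ≤ M := Finset.le_sup' _ (Finset.mem_univ i)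
      nlinarith [inv_pos.mpr hα]
    have := hmono h1
    rw [hones 0 (-(α⁻¹ * M))] at this
    linarith
  -- strict monotonicity of f on positives
  have hfmono : ∀ α β : ℝ, 0 < α → α < β → f α < f β := by
    intro α β hα hαβ
    apply hinc
    have hβ : 0 < β := lt_trans hα hαβ
    rw [Pi.lt_def]
    have key : ∀ i, (α⁻¹ • (-q)) i < (β⁻¹ • (-q)) i := by
      intro i
      simp only [Pi.smul_apply, Pi.neg_apply, smul_eq_mul]
      have hinv : β⁻¹ < α⁻¹ := (inv_lt_inv₀ hβ hα).mpr hαβ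
      nlinarith [hq i]
    obtain ⟨i⟩ := hn
    exact ⟨fun i => (key i).le, i, key i⟩
  -- endpoints
  set a := m / (2 * C 0) with ha
  set b := 2 * M / C 0 with hb
  have hapos : 0 < a := by positivity
  have hbpos : 0 < b := by positivity
  have hab : a < b := by
    rw [ha, hb, div_lt_div_iff₀ (by positivity) hC0]
    nlinarith
  have hfa : f a < 0 := by
    have : a⁻¹ * m = 2 * C 0 := by
      rw [ha]; field_simp
    have h2 := hub a hapos
    rw [this] at h2
    linarith
  have hfb : 0 < f b := by
    have h2 := hlb b hbpos
    have : b⁻¹ * M = C 0 / 2 := by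
      rw [hb]; field_simp
    rw [this] at h2
    linarith
  -- continuity of f on [a, b]
  have hfc : ContinuousOn f (Set.Icc a b) := by
    apply hcont.comp_continuousOn
    show ContinuousOn ((fun α : ℝ => α⁻¹) • (fun _ => -q)) (Set.Icc a b)
    apply ContinuousOn.smul _ continuousOn_const
    exact ContinuousOn.inv₀ continuousOn_id
      (fun x hx => ne_of_gt (lt_of_lt_of_le hapos hx.1))
  -- IVT
  have : (0 : ℝ) ∈ Set.Icc (f a) (f b) := ⟨hfa.le, hfb.le⟩
  obtain ⟨c, hc, hfc0⟩ := intermediate_value_Icc hab.le hfc this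
  have hcpos : 0 < c := lt_of_lt_of_le hapos hc.1
  refine ⟨c, ⟨hcpos, hfc0⟩, ?_⟩
  rintro d ⟨hdpos, hd0'⟩
  have hd0 : f d = 0 := hd0'
  rcases lt_trichotomy d c with h | h | h
  · have := hfmono d c hdpos h
    rw [hd0, hfc0] at this; linarith
  · exact h
  · have := hfmono c d hcpos h
    rw [hd0, hfc0] at this; linarith
end

section
/- Let C : ℝ^n → ℝ be convex, increasing, ones-invariant with C(0) > 0, and let φ : ℝ^n_{>0} → ℝ be defined by φ(q) = α where C(-q/α) = 0. Then φ is increasing on ℝ^n_{>0}: if 0 ≺ q' ⪇ q then φ(q') < φ(q). -/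
theorem stmt_6 (n : ℕ) (C : (Fin n → ℝ) → ℝ)
    (hconv : ConvexOn ℝ Set.univ C) (hinc : StrictMono C)
    (hC0 : 0 < C 0)
    (hones : ∀ (q : Fin n → ℝ) (t : ℝ), C (q + t • (1 : Fin n → ℝ)) = C q + t)
    (φ : (Fin n → ℝ) → ℝ)
    (hφ : ∀ q : Fin n → ℝ, (∀ i, 0 < q i) →
      0 < φ q ∧ C ((φ q)⁻¹ • (-q)) = 0) :
    ∀ q q' : Fin n → ℝ, (∀ i, 0 < q' i) → q' < q → φ q' < φ q := by
  intro q q' hq' hlt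
  have hq : ∀ i, 0 < q i := fun i => lt_of_lt_of_le (hq' i) (hlt.le i)
  obtain ⟨hα, hCα⟩ := hφ q hq
  obtain ⟨hα', hCα'⟩ := hφ q' hq'
  by_contra h
  push_neg at h
  have h1 : C ((φ q)⁻¹ • (-q)) < C ((φ q)⁻¹ • (-q')) :=
    hinc (smul_lt_smul_of_pos_left (neg_lt_neg hlt) (inv_pos.mpr hα))
  have h2 : (φ q)⁻¹ • (-q') ≤ (φ q')⁻¹ • (-q') := by
    intro i
    simp only [Pi.smul_apply, smul_eq_mul, Pi.neg_apply]
    have hle : (φ q')⁻¹ ≤ (φ q)⁻¹ := by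
      apply one_div_le_one_div_of_le hα h |>.trans_eq (one_div _) |>.trans_eq' (one_div _)
    nlinarith [hq' i]
  have h3 := hinc.monotone h2
  linarith
end

section
/- Let C : ℝ^n → ℝ be convex, increasing, ones-invariant with C(0) > 0, and let φ : ℝ^n_{>0} → ℝ be defined by φ(q) = α where C(-q/α) = 0. Then φ is concave on ℝ^n_{>0}. -/
theorem stmt_7 (n : ℕ) (C : (Fin n → ℝ) → ℝ)
    (hconv : ConvexOn ℝ Set.univ C) (hinc : StrictMono C)
    (hC0 : 0 < C 0)
    (hones : ∀ (q : Fin n → ℝ) (t : ℝ), C (q + t • (1 : Fin n → ℝ)) = C q + t)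
    (φ : (Fin n → ℝ) → ℝ)
    (hφ : ∀ q : Fin n → ℝ, (∀ i, 0 < q i) →
      0 < φ q ∧ C ((φ q)⁻¹ • (-q)) = 0) :
    ConcaveOn ℝ {q : Fin n → ℝ | ∀ i, 0 < q i} φ := by
  have hcomb : ∀ (x y : ℝ), 0 < x → 0 < y → ∀ a b : ℝ, 0 ≤ a → 0 ≤ b → a + b = 1 →
      0 < a * x + b * y := by
    intro x y hx hy a b ha hb hab
    rcases eq_or_lt_of_le ha with h | h
    · have hb1 : b = 1 := by linarith
      simpa [← h, hb1] using hy
    · have : 0 < a * x := mul_pos h hx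
      nlinarith [mul_nonneg hb hy.le]
  constructor
  · intro x hx y hy a b ha hb hab
    intro i
    exact hcomb (x i) (y i) (hx i) (hy i) a b ha hb hab
  · intro q hq p hp a b ha hb hab
    simp only [Set.mem_setOf_eq] at hq hp
    obtain ⟨hα, hCq⟩ := hφ q hq
    obtain ⟨hβ, hCp⟩ := hφ p hp
    set α := φ q
    set β := φ p
    set s : Fin n → ℝ := a • q + b • p with hs
    have hspos : ∀ i, 0 < s i := fun i =>
      hcomb (q i) (p i) (hq i) (hp i) a b ha hb hab
    obtain ⟨hδ, hCs⟩ := hφ s hspos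
    set δ := φ s
    set γ : ℝ := a * α + b * β with hγdef
    have hγ : 0 < γ := hcomb α β hα hβ a b ha hb hab
    -- key: C (γ⁻¹ • (-s)) ≤ 0
    have hkey : C (γ⁻¹ • (-s)) ≤ 0 := by
      have heq : γ⁻¹ • (-s) =
          (a * α / γ) • (α⁻¹ • (-q)) + (b * β / γ) • (β⁻¹ • (-p)) := by
        funext i
        simp only [Pi.add_apply, Pi.smul_apply, Pi.neg_apply, smul_eq_mul, hs]
        field_simp
        ring
      have h1 : 0 ≤ a * α / γ := div_nonneg (mul_nonneg ha hα.le) hγ.le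
      have h2 : 0 ≤ b * β / γ := div_nonneg (mul_nonneg hb hβ.le) hγ.le
      have h3 : a * α / γ + b * β / γ = 1 := by
        field_simp
        exact hγdef.symm
      have := hconv.2 (Set.mem_univ (α⁻¹ • (-q))) (Set.mem_univ (β⁻¹ • (-p)))
        h1 h2 h3
      rw [heq]
      calc C ((a * α / γ) • (α⁻¹ • (-q)) + (b * β / γ) • (β⁻¹ • (-p)))
          ≤ (a * α / γ) * C (α⁻¹ • (-q)) + (b * β / γ) * C (β⁻¹ • (-p)) := this
        _ = 0 := by rw [hCq, hCp]; ring
    -- conclude γ ≤ δ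
    have hle : γ ≤ δ := by
      by_contra h
      push_neg at h
      have hlt : δ⁻¹ • (-s) < γ⁻¹ • (-s) := by
        have hptwise : ∀ i, (δ⁻¹ • (-s)) i < (γ⁻¹ • (-s)) i := by
          intro i
          simp only [Pi.smul_apply, Pi.neg_apply, smul_eq_mul]
          have h1 : γ⁻¹ < δ⁻¹ := inv_strictAnti₀ hδ h
          have h2 : -s i < 0 := neg_neg_iff_pos.mpr (hspos i)
          nlinarith
        have hne : Nonempty (Fin n) := by
          by_contra hne
          rw [not_nonempty_iff] at hne
          have h1 := hones 0 1
          have heq : (0 : Fin n → ℝ) + (1:ℝ) • (1 : Fin n → ℝ) = 0 :=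
            Subsingleton.elim _ _
          rw [heq] at h1
          linarith
        exact Pi.lt_def.mpr ⟨fun i => (hptwise i).le, ⟨hne.some, hptwise hne.some⟩⟩
      have := hinc hlt
      rw [hCs] at this
      linarith
    calc a • φ q + b • φ p = γ := by simp [hγdef, smul_eq_mul]; rfl
      _ ≤ φ s := hle
end

section
/- For n = 2 and k > 0, define C_k : ℝ² → ℝ by C_k(q) = (1/2)(q₁ + q₂ + √(4k² + (q₁ - q₂)²)). Then for any q ∈ ℝ², C_k(-q) = 0 if and only if q₁ > 0, q₂ > 0, and √(q₁q₂) = k. -/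
theorem stmt_9 (k : ℝ) (hk : 0 < k)
    (C : ℝ × ℝ → ℝ)
    (hC : ∀ q : ℝ × ℝ,
      C q = (1/2) * (q.1 + q.2 + Real.sqrt (4*k^2 + (q.1 - q.2)^2))) :
    ∀ q : ℝ × ℝ, C (-q) = 0 ↔ 0 < q.1 ∧ 0 < q.2 ∧ Real.sqrt (q.1 * q.2) = k := by
  intro q
  rw [hC]
  simp only [Prod.fst_neg, Prod.snd_neg]
  constructor
  · intro h
    have heq : Real.sqrt (4*k^2 + (-q.1 - -q.2)^2) = q.1 + q.2 := by linarith
    have hnn : (0:ℝ) ≤ 4*k^2 + (-q.1 - -q.2)^2 := by positivity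
    have hsq : 4*k^2 + (-q.1 - -q.2)^2 = (q.1 + q.2)^2 := by
      rw [← heq]; exact (Real.sq_sqrt hnn).symm
    have hprod : q.1 * q.2 = k^2 := by nlinarith
    have hsum : 0 < q.1 + q.2 := by
      have h2 : Real.sqrt (4*k^2 + (-q.1 - -q.2)^2) ≥ Real.sqrt (4*k^2) := by
        apply Real.sqrt_le_sqrt; nlinarith
      have h3 : Real.sqrt (4*k^2) > 0 := Real.sqrt_pos.mpr (by positivity)
      linarith [heq ▸ (le_trans h3.le h2)]
    have h1 : 0 < q.1 := by nlinarith
    have h2 : 0 < q.2 := by nlinarith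
    refine ⟨h1, h2, ?_⟩
    rw [hprod, Real.sqrt_sq hk.le]
  · rintro ⟨h1, h2, h3⟩
    have hprod : q.1 * q.2 = k^2 := by
      have := Real.sq_sqrt (by positivity : (0:ℝ) ≤ q.1 * q.2)
      rw [h3] at this; linarith
    have : 4*k^2 + (-q.1 - -q.2)^2 = (q.1 + q.2)^2 := by nlinarith
    rw [this, Real.sqrt_sq (by linarith)]
    ring
end

section
/- Let φ : ℝ^n → ℝ be concave and increasing. For any q ∈ ℝ^n and any r, r' ∈ ℝ^n with r, r' ⪈ 0 (nonnegative, nonzero), there exists β ≥ 0 such that φ(q + r - β·r') = φ(q). -/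
theorem stmt_16 (n : ℕ) (φ : (Fin n → ℝ) → ℝ)
    (hconc : ConcaveOn ℝ Set.univ φ) (hinc : StrictMono φ)
    (q r r' : Fin n → ℝ) (hr : 0 < r) (hr' : 0 < r') :
    ∃ β : ℝ, 0 ≤ β ∧ φ (q + r - β • r') = φ q := by
  set g : ℝ → ℝ := fun t => φ (q + r + t • r') with hg
  have hline : ∀ t : ℝ, (AffineMap.lineMap (q + r) (q + r + r') : ℝ →ᵃ[ℝ] (Fin n → ℝ)) t
      = q + r + t • r' := by
    intro t
    simp [AffineMap.lineMap_apply]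
    abel
  have hgconc : ConcaveOn ℝ Set.univ g := by
    have := hconc.comp_affineMap (AffineMap.lineMap (q + r) (q + r + r') : ℝ →ᵃ[ℝ] (Fin n → ℝ))
    have heq : g = φ ∘ (AffineMap.lineMap (q + r) (q + r + r') : ℝ →ᵃ[ℝ] (Fin n → ℝ)) := by
      funext t; simp [hg, hline t]
    rw [heq]
    simpa using this
  have hgcont : ContinuousOn g Set.univ := hgconc.continuousOn isOpen_univ
  have hg0 : φ q < g 0 := by
    simp only [hg, zero_smul, add_zero]
    exact hinc (lt_add_of_pos_right q hr)
  have hg01 : g 0 < g 1 := by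
    have h : q + r + (0:ℝ) • r' < q + r + (1:ℝ) • r' := by
      simpa using lt_add_of_pos_right (q + r) hr'
    exact hinc h
  -- choose t₀ < 0 with g t₀ ≤ φ q
  set c : ℝ := g 1 - g 0 with hc
  have hcpos : 0 < c := sub_pos.mpr hg01
  set t₀ : ℝ := -(g 0 - φ q) / c with ht₀
  have ht₀neg : t₀ < 0 := div_neg_of_neg_of_pos (by linarith) hcpos
  -- concavity three-point inequality: g 0 ≥ λ g t₀ + (1-λ) g 1 with λ = 1/(1-t₀)
  have key : g t₀ ≤ φ q := by
    set lam : ℝ := 1 / (1 - t₀) with hlam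
    have h1t : (0:ℝ) < 1 - t₀ := by linarith
    have hlampos : 0 < lam := by positivity
    have hlamle : lam ≤ 1 := by
      rw [hlam, div_le_one h1t]; linarith
    have hcomb := hconc.2 (Set.mem_univ (q + r + t₀ • r')) (Set.mem_univ (q + r + (1:ℝ) • r'))
      (le_of_lt hlampos) (by linarith : (0:ℝ) ≤ 1 - lam) (by ring)
    have hlamt : lam * t₀ + (1 - lam) * 1 = 0 := by
      rw [hlam]; field_simp; ring
    have hpt : lam • (q + r + t₀ • r') + (1 - lam) • (q + r + (1:ℝ) • r') = q + r := by
      calc lam • (q + r + t₀ • r') + (1 - lam) • (q + r + (1:ℝ) • r')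
          = (q + r) + (lam * t₀ + (1 - lam) * 1) • r' := by module
        _ = q + r := by rw [hlamt, zero_smul, add_zero]
    have hcomb2 : lam • φ (q + r + t₀ • r') + (1 - lam) • φ (q + r + (1:ℝ) • r')
        ≤ φ (q + r) := le_trans hcomb (le_of_eq (congrArg φ hpt))
    have hcomb' : lam * g t₀ + (1 - lam) * g 1 ≤ g 0 := by
      simpa [hg, smul_eq_mul] using hcomb2
    -- g t₀ ≤ (g 0 - (1-lam) g 1) / lam = g 0 + (-t₀)(g0 - g1) ... compute
    have hlamne : (1 - t₀) ≠ 0 := ne_of_gt h1t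
    have hexp : lam = 1 / (1 - t₀) := hlam
    -- From hcomb': g t₀ ≤ (g 0 - (1-lam) * g 1)/lam
    have h2 : g t₀ ≤ (g 0 - (1 - lam) * g 1) / lam := by
      rw [le_div_iff₀ hlampos]; linarith
    have h3 : (g 0 - (1 - lam) * g 1) / lam = (1 - t₀) * g 0 + t₀ * g 1 := by
      rw [hexp]; field_simp; ring
    rw [h3] at h2
    have : (1 - t₀) * g 0 + t₀ * g 1 = g 0 + t₀ * c := by rw [hc]; ring
    rw [this] at h2
    have h4 : t₀ * c = -(g 0 - φ q) := by
      rw [ht₀, div_mul_cancel₀ _ (ne_of_gt hcpos)]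
    linarith
  -- IVT on [t₀, 0]
  have hsub : Set.Icc (g t₀) (g 0) ⊆ g '' Set.Icc t₀ 0 :=
    intermediate_value_Icc (le_of_lt ht₀neg) (hgcont.mono (Set.subset_univ _))
  obtain ⟨t, htmem, htval⟩ := hsub ⟨key, le_of_lt hg0⟩
  refine ⟨-t, by linarith [htmem.2], ?_⟩
  have heq2 : q + r - (-t) • r' = q + r + t • r' := by
    funext i
    simp only [Pi.sub_apply, Pi.add_apply, Pi.smul_apply, smul_eq_mul]
    ring
  rw [heq2]
  exact htval
end
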